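/- For the α-skew random walk, the n-step distribution satisfies: P(S^{(α)}_k = m) = α·P(|S_k| = m) for m > 0, P(S^{(α)}_k = m) = (1−α)·P(|S_k| = −m) for m < 0, and P(S^{(α)}_k = 0) = P(S_k = 0), where S is the simple symmetric random walk started at 0. -/

import Mathlib

open MeasureTheory

/-- One-step transition probability of the α-skew random walk. -/
noncomputable def stepP (α : ℝ) (m m' : ℤ) : ℝ :=
  if m' = m + 1 then (if m = 0 then α else 1/2)
  else if m' = m - 1 then (if m = 0 then 1 - α else 1/2)
  else 0

/-- `S` is an α-skew random walk started at `0` under the probability measure `P`: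
its finite-dimensional distributions are given by the product of the one-step
transition probabilities, with initial state `0`. -/
def IsSkewRW (α : ℝ) {Ω : Type*} [MeasurableSpace Ω] (P : Measure Ω)
    (S : ℕ → Ω → ℤ) : Prop :=
  IsProbabilityMeasure P ∧ (∀ k, Measurable (S k)) ∧
  ∀ (n : ℕ) (path : ℕ → ℤ),
    P {ω | ∀ k ≤ n, S k ω = path k} =
      ENNReal.ofReal ((if path 0 = 0 then 1 else 0) *
        ∏ k ∈ Finset.range n, stepP α (path k) (path (k + 1)))

/-- Return probabilities of the simple symmetric random walk. -/
noncomputable def gfun (k : ℕ) : ℝ :=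
  if Even k then (Nat.choose k (k / 2) : ℝ) / 2 ^ k else 0

/-!
Summing the path weights over all paths ending at `y` shows that the one-dimensional laws `L n`
of a Markov chain satisfy the forward equation `L (n + 1) y = ∑' x, L n x * κ x y`. For the skew
walk this equation differs from the symmetric one (`α = 1/2`) only at `-1`, `0` and `1`. Using
`α + (1 - α) = 1` at `0` and `1/2 + 1/2 = 1` at `±1`, induction on `k` gives
`L^α k m = α (L k m + L k (-m))` for `m > 0`, the same with `1 - α` for `m < 0`, and
`L^α k 0 = L k 0`; and `L k m + L k (-m)` is the law of `|S k|` at `m > 0`.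
-/

open scoped ENNReal

section MarkovChain

variable {σ : Type*} (μ₀ : σ → ℝ≥0∞) (κ : σ → σ → ℝ≥0∞)

noncomputable def pathWeight (n : ℕ) (p : Fin (n + 1) → σ) : ℝ≥0∞ :=
  μ₀ (p 0) * ∏ j : Fin n, κ (p j.castSucc) (p j.succ)

noncomputable def chainLaw : ℕ → σ → ℝ≥0∞
  | 0 => μ₀
  | n + 1 => fun y => ∑' x, chainLaw n x * κ x y

lemma pathWeight_snoc (n : ℕ) (p : Fin (n + 1) → σ) (x : σ) :
    pathWeight μ₀ κ (n + 1) (Fin.snoc p x) = pathWeight μ₀ κ n p * κ (p (Fin.last n)) x := by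
  simp only [pathWeight, Fin.prod_univ_castSucc, ← Fin.castSucc_succ, Fin.snoc_castSucc,
    Fin.succ_last, Fin.snoc_last, ← Fin.castSucc_zero, mul_assoc]

lemma tsum_pathWeight_mul (n : ℕ) (g : σ → ℝ≥0∞) :
    ∑' p, pathWeight μ₀ κ n p * g (p (Fin.last n)) = ∑' y, chainLaw μ₀ κ n y * g y := by
  induction n generalizing g with
  | zero =>
    rw [← (Equiv.funUnique (Fin 1) σ).symm.tsum_eq]
    simp [pathWeight, chainLaw]
  | succ n ih =>
    calc ∑' p, pathWeight μ₀ κ (n + 1) p * g (p (Fin.last (n + 1)))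
        = ∑' p, pathWeight μ₀ κ n p * ∑' x, κ (p (Fin.last n)) x * g x := by
          rw [← (Fin.snocEquiv fun _ => σ).tsum_eq, ENNReal.tsum_prod', ENNReal.tsum_comm]
          simp [Fin.snocEquiv, pathWeight_snoc, ← ENNReal.tsum_mul_left, mul_assoc]
      _ = ∑' y, chainLaw μ₀ κ n y * ∑' x, κ y x * g x := ih fun y => ∑' x, κ y x * g x
      _ = ∑' x, chainLaw μ₀ κ (n + 1) x * g x := by
          simp only [chainLaw, ← ENNReal.tsum_mul_left, ← ENNReal.tsum_mul_right, mul_assoc]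
          exact ENNReal.tsum_comm

end MarkovChain

lemma measure_eq_chainLaw {σ Ω : Type*} [Countable σ] [MeasurableSpace σ]
    [MeasurableSingletonClass σ] [MeasurableSpace Ω] {μ₀ : σ → ℝ≥0∞} {κ : σ → σ → ℝ≥0∞}
    {P : Measure Ω} {X : ℕ → Ω → σ} (hX : ∀ n, Measurable (X n))
    (hpath : ∀ n (p : Fin (n + 1) → σ),
      P {ω | ∀ j : Fin (n + 1), X j ω = p j} = pathWeight μ₀ κ n p)
    (n : ℕ) (y : σ) :
    P {ω | X n ω = y} = chainLaw μ₀ κ n y := by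
  classical
  set Y : Ω → Fin (n + 1) → σ := fun ω j => X j ω
  have hY : Measurable Y := measurable_pi_lambda _ fun j => hX j
  have hlast : MeasurableSet {p : Fin (n + 1) → σ | p (Fin.last n) = y} :=
    measurableSet_singleton y |>.preimage (measurable_pi_apply (Fin.last n))
  have hsingle : ∀ p, P.map Y {p} = pathWeight μ₀ κ n p := fun p => by
    rw [Measure.map_apply hY (measurableSet_singleton p), ← hpath]
    simp [Y, Set.preimage, funext_iff]
  calc P {ω | X n ω = y} = P.map Y {p | p (Fin.last n) = y} := by
        rw [Measure.map_apply hY hlast]; rfl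
    _ = ∑' p, pathWeight μ₀ κ n p * if p (Fin.last n) = y then 1 else 0 := by
        rw [← Measure.tsum_indicator_apply_singleton _ _ hlast]
        simp [Set.indicator_apply, hsingle]
    _ = chainLaw μ₀ κ n y := by
        rw [tsum_pathWeight_mul μ₀ κ n fun x => if x = y then 1 else 0]; simp

lemma stepP_nonneg {α : ℝ} (hα : α ∈ Set.Icc 0 1) (x y : ℤ) : 0 ≤ stepP α x y := by
  obtain ⟨h0, h1⟩ := hα
  unfold stepP
  split_ifs <;> linarith

noncomputable def skewKernel (α : ℝ) (x y : ℤ) : ℝ≥0∞ := ENNReal.ofReal (stepP α x y)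

noncomputable def skewLaw (α : ℝ) : ℕ → ℤ → ℝ≥0∞ := chainLaw (Pi.single 0 1) (skewKernel α)

lemma IsSkewRW.measure_cylinder {α : ℝ} (hα : α ∈ Set.Icc 0 1) {Ω : Type*} [MeasurableSpace Ω]
    {P : Measure Ω} {S : ℕ → Ω → ℤ} (h : IsSkewRW α P S) (n : ℕ) (p : Fin (n + 1) → ℤ) :
    P {ω | ∀ j : Fin (n + 1), S j ω = p j} = pathWeight (Pi.single 0 1) (skewKernel α) n p := by
  set path : ℕ → ℤ := fun j => if hj : j < n + 1 then p ⟨j, hj⟩ else 0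
  have hcyl : {ω | ∀ j : Fin (n + 1), S j ω = p j} = {ω | ∀ j ≤ n, S j ω = path j} := by
    ext ω
    simp +contextual [path, Fin.forall_iff]
  have hpath : ∀ j : Fin (n + 1), path j = p j := fun j => dif_pos j.isLt
  have hpath0 : path 0 = p 0 := by simpa using hpath 0
  rw [hcyl, h.2.2 n path, ENNReal.ofReal_mul (by positivity),
    ENNReal.ofReal_prod_of_nonneg fun _ _ => stepP_nonneg hα _ _, ← Fin.prod_univ_eq_prod_range]
  congr 1
  · rw [hpath0, Pi.single_apply]
    split_ifs <;> simp
  · exact Finset.prod_congr rfl fun j _ => by rw [← hpath j.castSucc, ← hpath j.succ]; rfl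

lemma IsSkewRW.measure_eq_skewLaw {α : ℝ} (hα : α ∈ Set.Icc 0 1) {Ω : Type*}
    [MeasurableSpace Ω] {P : Measure Ω} {S : ℕ → Ω → ℤ} (h : IsSkewRW α P S) (k : ℕ) (m : ℤ) :
    P {ω | S k ω = m} = skewLaw α k m :=
  measure_eq_chainLaw h.2.1 (h.measure_cylinder hα) k m

lemma skewLaw_succ (α : ℝ) (k : ℕ) (m : ℤ) :
    skewLaw α (k + 1) m =
      skewLaw α k (m - 1) * ENNReal.ofReal (if m - 1 = 0 then α else 1 / 2) +
      skewLaw α k (m + 1) * ENNReal.ofReal (if m + 1 = 0 then 1 - α else 1 / 2) := by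
  have hsupp : ∀ x ∉ ({m - 1, m + 1} : Finset ℤ), skewLaw α k x * skewKernel α x m = 0 := by
    intro x hx
    simp only [Finset.mem_insert, Finset.mem_singleton, not_or] at hx
    simp [skewKernel, stepP, show m ≠ x + 1 by omega, show m ≠ x - 1 by omega]
  simp only [skewLaw, chainLaw] at hsupp ⊢
  rw [tsum_eq_sum hsupp, Finset.sum_pair (by omega)]
  simp [skewKernel, stepP, show m ≠ m + 1 + 1 by omega]

lemma mul_ofReal_half_add_mul_ofReal_half (x : ℝ≥0∞) :
    x * ENNReal.ofReal (1 / 2) + x * ENNReal.ofReal (1 / 2) = x := by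
  rw [← mul_add, ← ENNReal.ofReal_add (by norm_num) (by norm_num)]
  norm_num

section SkewLawStep

variable {α : ℝ} {k : ℕ}

lemma skewLaw_succ_of_pos (h0 : skewLaw α k 0 = skewLaw (1 / 2) k 0)
    (hpos : ∀ m, 0 < m → skewLaw α k m =
      ENNReal.ofReal α * (skewLaw (1 / 2) k m + skewLaw (1 / 2) k (-m)))
    {m : ℤ} (hm : 0 < m) :
    skewLaw α (k + 1) m =
      ENNReal.ofReal α * (skewLaw (1 / 2) (k + 1) m + skewLaw (1 / 2) (k + 1) (-m)) := by
  rcases (show m = 1 ∨ 1 < m by omega) with rfl | hm1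
  · norm_num [skewLaw_succ]
    rw [h0, hpos 2 two_pos]
    conv_lhs => rw [← mul_ofReal_half_add_mul_ofReal_half (skewLaw (1 / 2) k 0)]
    ring
  · norm_num [skewLaw_succ, show m - 1 ≠ 0 by omega, show m + 1 ≠ 0 by omega,
      show -m - 1 ≠ 0 by omega, show -m + 1 ≠ 0 by omega]
    rw [hpos (m - 1) (by omega), hpos (m + 1) (by omega),
      show -(m - 1) = -m + 1 by ring, show -(m + 1) = -m - 1 by ring]
    ring

lemma skewLaw_succ_of_neg (h0 : skewLaw α k 0 = skewLaw (1 / 2) k 0)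
    (hneg : ∀ m < 0, skewLaw α k m =
      ENNReal.ofReal (1 - α) * (skewLaw (1 / 2) k m + skewLaw (1 / 2) k (-m)))
    {m : ℤ} (hm : m < 0) :
    skewLaw α (k + 1) m =
      ENNReal.ofReal (1 - α) * (skewLaw (1 / 2) (k + 1) m + skewLaw (1 / 2) (k + 1) (-m)) := by
  rcases (show m = -1 ∨ m < -1 by omega) with rfl | hm1
  · norm_num [skewLaw_succ]
    rw [h0, hneg (-2) (by norm_num), neg_neg]
    conv_lhs => rw [← mul_ofReal_half_add_mul_ofReal_half (skewLaw (1 / 2) k 0)]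
    ring
  · norm_num [skewLaw_succ, show m - 1 ≠ 0 by omega, show m + 1 ≠ 0 by omega,
      show -m - 1 ≠ 0 by omega, show -m + 1 ≠ 0 by omega]
    rw [hneg (m - 1) (by omega), hneg (m + 1) (by omega),
      show -(m - 1) = -m + 1 by ring, show -(m + 1) = -m - 1 by ring]
    ring

lemma skewLaw_succ_zero (hα : α ∈ Set.Icc 0 1)
    (hpos : ∀ m, 0 < m → skewLaw α k m =
      ENNReal.ofReal α * (skewLaw (1 / 2) k m + skewLaw (1 / 2) k (-m)))
    (hneg : ∀ m < 0, skewLaw α k m =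
      ENNReal.ofReal (1 - α) * (skewLaw (1 / 2) k m + skewLaw (1 / 2) k (-m))) :
    skewLaw α (k + 1) 0 = skewLaw (1 / 2) (k + 1) 0 := by
  have hsum : ENNReal.ofReal α + ENNReal.ofReal (1 - α) = 1 := by
    rw [← ENNReal.ofReal_add hα.1 (by linarith [hα.2])]
    simp
  norm_num [skewLaw_succ]
  rw [hneg (-1) (by norm_num), hpos 1 one_pos, neg_neg]
  calc _ = (ENNReal.ofReal α + ENNReal.ofReal (1 - α)) *
        (skewLaw (1 / 2) k (-1) * ENNReal.ofReal (1 / 2) +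
          skewLaw (1 / 2) k 1 * ENNReal.ofReal (1 / 2)) := by ring
    _ = _ := by rw [hsum, one_mul]

end SkewLawStep

theorem skewLaw_eq_skewLaw_half {α : ℝ} (hα : α ∈ Set.Icc 0 1) (k : ℕ) :
    (∀ m, 0 < m → skewLaw α k m =
      ENNReal.ofReal α * (skewLaw (1 / 2) k m + skewLaw (1 / 2) k (-m))) ∧
    (∀ m < 0, skewLaw α k m =
      ENNReal.ofReal (1 - α) * (skewLaw (1 / 2) k m + skewLaw (1 / 2) k (-m))) ∧
    skewLaw α k 0 = skewLaw (1 / 2) k 0 := by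
  induction k with
  | zero =>
    refine ⟨fun m hm => ?_, fun m hm => ?_, rfl⟩ <;>
      simp [skewLaw, chainLaw, hm.ne, hm.ne']
  | succ k ih =>
    obtain ⟨hpos, hneg, h0⟩ := ih
    exact ⟨fun m hm => skewLaw_succ_of_pos h0 hpos hm, fun m hm => skewLaw_succ_of_neg h0 hneg hm,
      skewLaw_succ_zero hα hpos hneg⟩

lemma measure_abs_eq_add {Ω : Type*} [MeasurableSpace Ω] (P : Measure Ω) {X : Ω → ℤ}
    (hX : Measurable X) {m : ℤ} (hm : 0 < m) :
    P {ω | |X ω| = m} = P {ω | X ω = m} + P {ω | X ω = -m} := by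
  have hunion : {ω | |X ω| = m} = {ω | X ω = m} ∪ {ω | X ω = -m} := by
    ext ω
    exact abs_eq hm.le
  refine hunion ▸ measure_union ?_ (hX (measurableSet_singleton (-m)))
  exact Set.disjoint_left.2 fun ω (h₁ : X ω = m) (h₂ : X ω = -m) => by omega

theorem skew_nstep_distribution {Ω Ω' : Type*} [MeasurableSpace Ω] [MeasurableSpace Ω']
    (P : Measure Ω) (P' : Measure Ω') (Sα : ℕ → Ω → ℤ) (S : ℕ → Ω' → ℤ)
    (α : ℝ) (hα : α ∈ Set.Ioo (0 : ℝ) 1)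
    (hSα : IsSkewRW α P Sα) (hS : IsSkewRW (1/2) P' S) (k : ℕ) (m : ℤ) :
    (0 < m → P {ω | Sα k ω = m} = ENNReal.ofReal α * P' {ω | |S k ω| = m}) ∧
    (m < 0 → P {ω | Sα k ω = m} = ENNReal.ofReal (1 - α) * P' {ω | |S k ω| = -m}) ∧
    (m = 0 → P {ω | Sα k ω = m} = P' {ω | S k ω = 0}) := by
  have hα' : α ∈ Set.Icc 0 1 := Set.Ioo_subset_Icc_self hα
  obtain ⟨hpos, hneg, h0⟩ := skewLaw_eq_skewLaw_half hα' k
  have hlawα := hSα.measure_eq_skewLaw hα' k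
  have hlaw := hS.measure_eq_skewLaw (by norm_num) k
  refine ⟨fun hm => ?_, fun hm => ?_, fun hm => ?_⟩
  · rw [measure_abs_eq_add P' (hS.2.1 k) hm, hlawα, hlaw, hlaw, hpos m hm]
  · rw [measure_abs_eq_add P' (hS.2.1 k) (neg_pos.2 hm), neg_neg, hlawα, hlaw, hlaw, hneg m hm,
      add_comm]
  · rw [hm, hlawα, hlaw, h0]
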